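/- arXiv:1907.11457 — 6 statements merged into one kernel-verified Lean document; each statement's English description precedes it below -/
import Mathlib

section
/- Let σ_1, …, σ_k be affine bases of ℝⁿ and A_1, …, A_k : ℝⁿ → ℝᵐ affine maps such that for all i, i', the maps A_i and A_{i'} agree on convexHull ℝ (Set.range σ_i) ∩ convexHull ℝ (Set.range σ_{i'}). Let N be the two-hidden-layer feed-forward network of the paper's architecture determined by the σ_i and A_i. Then for every x ∈ ⋃_i convexHull ℝ (Set.range σ_i), one has Σ_i ψ_i(x) ≥ 1 (so N(x) is well defined), and N(x) = A_j(x) for every j such that x ∈ convexHull ℝ (Set.range σ_j). (This is the correctness of the indicator–averaging readout φ_3 in the proof of Theorem 3.1.) -/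
open scoped BigOperators

/-- The indicator ψ of an affine basis σ: 1 if all barycentric coordinates of x with
respect to σ are ≥ 0 (i.e. x lies in the simplex spanned by σ), 0 otherwise. -/
noncomputable def simplexIndicator {n : ℕ}
    (σ : AffineBasis (Fin (n + 1)) ℝ (Fin n → ℝ)) (x : Fin n → ℝ) : ℝ :=
  if ∀ i, 0 ≤ σ.coord i x then 1 else 0

/-- The two-hidden-layer feed-forward network of the paper's architecture determined by
affine bases σ_1, …, σ_k of ℝⁿ and affine maps A_1, …, A_k : ℝⁿ → ℝᵐ:
N(x) = (Σ_i ψ_i(x) • A_i(x)) / (Σ_i ψ_i(x)). -/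
noncomputable def paperNetwork {n m k : ℕ}
    (σ : Fin k → AffineBasis (Fin (n + 1)) ℝ (Fin n → ℝ))
    (A : Fin k → ((Fin n → ℝ) →ᵃ[ℝ] (Fin m → ℝ))) (x : Fin n → ℝ) : Fin m → ℝ :=
  (∑ i, simplexIndicator (σ i) x)⁻¹ • ∑ i, simplexIndicator (σ i) x • A i (x)

/-!
The indicators ψ_i(x) are 0/1 weights whose support is the set of simplices containing `x`,
so `N(x)` is the centre of mass of the values `A_i(x)` over those simplices. By the
compatibility hypothesis all these values equal `A_j(x)`, and the total weight is positive
as soon as `x` lies in some simplex.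
-/

section SimplexIndicator

variable {n : ℕ} (σ : AffineBasis (Fin (n + 1)) ℝ (Fin n → ℝ)) (x : Fin n → ℝ)

theorem simplexIndicator_eq_indicator :
    simplexIndicator σ x = (convexHull ℝ (Set.range σ)).indicator 1 x := by
  rw [σ.convexHull_eq_nonneg_coord, simplexIndicator, Set.indicator_apply]
  rfl

theorem simplexIndicator_nonneg : 0 ≤ simplexIndicator σ x := by
  rw [simplexIndicator_eq_indicator]
  exact Set.indicator_nonneg (fun _ _ => zero_le_one) x

theorem simplexIndicator_ne_zero_iff :
    simplexIndicator σ x ≠ 0 ↔ x ∈ convexHull ℝ (Set.range σ) := by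
  simp [simplexIndicator_eq_indicator]

theorem simplexIndicator_eq_one_of_mem (hx : x ∈ convexHull ℝ (Set.range σ)) :
    simplexIndicator σ x = 1 := by
  simp [simplexIndicator_eq_indicator, hx]

end SimplexIndicator

theorem one_le_sum_simplexIndicator {n k : ℕ}
    (σ : Fin k → AffineBasis (Fin (n + 1)) ℝ (Fin n → ℝ)) {x : Fin n → ℝ} {j : Fin k}
    (hx : x ∈ convexHull ℝ (Set.range (σ j))) :
    1 ≤ ∑ i, simplexIndicator (σ i) x :=
  calc 1 = simplexIndicator (σ j) x := (simplexIndicator_eq_one_of_mem _ _ hx).symm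
    _ ≤ ∑ i, simplexIndicator (σ i) x :=
      Finset.single_le_sum (fun i _ => simplexIndicator_nonneg (σ i) x) (Finset.mem_univ j)

theorem paperNetwork_eq_centerMass {n m k : ℕ}
    (σ : Fin k → AffineBasis (Fin (n + 1)) ℝ (Fin n → ℝ))
    (A : Fin k → ((Fin n → ℝ) →ᵃ[ℝ] (Fin m → ℝ))) (x : Fin n → ℝ) :
    paperNetwork σ A x =
      Finset.univ.centerMass (fun i => simplexIndicator (σ i) x) (fun i => A i x) :=
  rfl

/-- If the affine maps A_i agree pairwise on intersections of the simplices
spanned by the σ_i, then on the union of those simplices Σ_i ψ_i(x) ≥ 1 and the network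
agrees with A_j on the simplex spanned by σ_j. -/
theorem paperNetwork_correct (n m k : ℕ)
    (σ : Fin k → AffineBasis (Fin (n + 1)) ℝ (Fin n → ℝ))
    (A : Fin k → ((Fin n → ℝ) →ᵃ[ℝ] (Fin m → ℝ)))
    (hA : ∀ i i' : Fin k, ∀ x : Fin n → ℝ,
      x ∈ convexHull ℝ (Set.range (σ i)) ∩ convexHull ℝ (Set.range (σ i')) →
        A i x = A i' x) :
    ∀ x ∈ ⋃ i, convexHull ℝ (Set.range (σ i)),
      1 ≤ ∑ i, simplexIndicator (σ i) x ∧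
      ∀ j : Fin k, x ∈ convexHull ℝ (Set.range (σ j)) → paperNetwork σ A x = A j x := by
  intro x hx
  obtain ⟨i₀, hx₀⟩ := Set.mem_iUnion.1 hx
  have hsum := one_le_sum_simplexIndicator σ hx₀
  refine ⟨hsum, fun j hj => ?_⟩
  have hvalues : ∀ i ∈ Finset.univ, simplexIndicator (σ i) x ≠ 0 → A i x = A j x :=
    fun i _ hi => hA i j x ⟨(simplexIndicator_ne_zero_iff _ _).1 hi, hj⟩
  rw [paperNetwork_eq_centerMass, Finset.centerMass_congr_fun hvalues]
  exact Finset.centerMass_const (by linarith) (A j x)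
end

section
/- (Theorem 3.1) Let K be a finite simplicial complex in ℝⁿ that is pure n-dimensional, i.e., every face of K is contained in a face consisting of n+1 points which form an affine basis of ℝⁿ, and let L be a simplicial complex in ℝᵐ. Let F : ℝⁿ → ℝᵐ be a simplicial map from K to L. Then there exist affine bases σ_1, …, σ_k of ℝⁿ (the maximal faces of K) and affine maps A_1, …, A_k : ℝⁿ → ℝᵐ such that the two-hidden-layer feed-forward network N of the paper's architecture determined by the σ_i and A_i satisfies N(x) = F(x) for every x ∈ K.space. -/
/-!
The indicator ψ of an affine basis σ is the indicator of the simplex `convexHull (range σ)`, so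
the network at `x` is the average of the values `A i x` over the simplices `σ i` containing `x`.
Taking for `σ i` the top-dimensional faces of `K` and for `A i` the affine map that agrees with
`F` on that face, every term of the average equals `F x`, and purity of `K` guarantees that each
point of `K.space` lies in at least one of these faces, so the average is not over an empty set.
-/

open scoped BigOperators
open Geometry

/-- A simplicial map from K to L: affine on (the convex hull of) each face of K, sending
vertices of K to vertices of L, and each face of K into some face of L. -/
def IsSimplicialMap {n m : ℕ} (K : SimplicialComplex ℝ (Fin n → ℝ))
    (L : SimplicialComplex ℝ (Fin m → ℝ)) (F : (Fin n → ℝ) → (Fin m → ℝ)) : Prop :=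
  (∀ σ ∈ K.faces, ∃ A : (Fin n → ℝ) →ᵃ[ℝ] (Fin m → ℝ),
      ∀ x ∈ convexHull ℝ (σ : Set (Fin n → ℝ)), F x = A x) ∧
  (∀ v ∈ K.vertices, F v ∈ L.vertices) ∧
  (∀ σ ∈ K.faces, ∃ μ ∈ L.faces,
      F '' convexHull ℝ (σ : Set (Fin n → ℝ)) ⊆ convexHull ℝ (μ : Set (Fin m → ℝ)))

/-- K is pure n-dimensional: every face is contained in a face consisting of n+1 points
which form an affine basis of ℝⁿ. -/
def IsPureComplex {n : ℕ} (K : SimplicialComplex ℝ (Fin n → ℝ)) : Prop :=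
  ∀ σ ∈ K.faces, ∃ τ ∈ K.faces, σ ⊆ τ ∧
    ∃ b : AffineBasis (Fin (n + 1)) ℝ (Fin n → ℝ), Set.range ⇑b = (τ : Set (Fin n → ℝ))

open Set

theorem simplexIndicator_eq_indicator_convexHull {n : ℕ}
    (σ : AffineBasis (Fin (n + 1)) ℝ (Fin n → ℝ)) (x : Fin n → ℝ) :
    simplexIndicator σ x = (convexHull ℝ (range σ)).indicator 1 x := by
  rw [σ.convexHull_eq_nonneg_coord, simplexIndicator, indicator_apply]
  congr

theorem paperNetwork_eq_of_forall_mem_convexHull {n m k : ℕ}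
    {σ : Fin k → AffineBasis (Fin (n + 1)) ℝ (Fin n → ℝ)}
    {A : Fin k → ((Fin n → ℝ) →ᵃ[ℝ] (Fin m → ℝ))} {x : Fin n → ℝ} {y : Fin m → ℝ}
    (hcover : ∃ i, x ∈ convexHull ℝ (range (σ i)))
    (hagree : ∀ i, x ∈ convexHull ℝ (range (σ i)) → A i x = y) :
    paperNetwork σ A x = y := by
  obtain ⟨i₀, hi₀⟩ := hcover
  have hterm : ∀ i, simplexIndicator (σ i) x • A i x = simplexIndicator (σ i) x • y := by
    intro i
    by_cases h : x ∈ convexHull ℝ (range (σ i))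
    · rw [hagree i h]
    · rw [simplexIndicator_eq_indicator_convexHull, indicator_of_notMem h, zero_smul, zero_smul]
  have hpos : 0 < ∑ i, simplexIndicator (σ i) x := by
    refine Finset.sum_pos' (fun i _ => ?_) ⟨i₀, Finset.mem_univ _, ?_⟩
    · rw [simplexIndicator_eq_indicator_convexHull]
      exact indicator_nonneg (fun _ _ => zero_le_one) _
    · rw [simplexIndicator_eq_indicator_convexHull, indicator_of_mem hi₀]
      exact one_pos
  rw [paperNetwork, Finset.sum_congr rfl fun i _ => hterm i, ← Finset.sum_smul,
    inv_smul_smul₀ hpos.ne']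

def basisFaces {n : ℕ} (K : SimplicialComplex ℝ (Fin n → ℝ)) : Set (Finset (Fin n → ℝ)) :=
  {τ | τ ∈ K.faces ∧
    ∃ b : AffineBasis (Fin (n + 1)) ℝ (Fin n → ℝ), range ⇑b = (τ : Set (Fin n → ℝ))}

theorem IsPureComplex.exists_mem_basisFaces_of_mem_space {n : ℕ}
    {K : SimplicialComplex ℝ (Fin n → ℝ)} (hK : IsPureComplex K) {x : Fin n → ℝ}
    (hx : x ∈ K.space) : ∃ τ ∈ basisFaces K, x ∈ convexHull ℝ (τ : Set (Fin n → ℝ)) := by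
  obtain ⟨σ, hσK, hxσ⟩ := K.mem_space_iff.mp hx
  obtain ⟨τ, hτK, hστ, hτbasis⟩ := hK σ hσK
  exact ⟨τ, ⟨hτK, hτbasis⟩, convexHull_mono (Finset.coe_subset.mpr hστ) hxσ⟩

/-- Theorem 3.1: every simplicial map F from a finite pure simplicial
complex K in ℝⁿ to a simplicial complex L in ℝᵐ is realized, on K.space, by a
two-hidden-layer feed-forward network of the paper's architecture whose affine bases
are (the vertex sets of) maximal faces of K. -/
theorem simplicialMap_eq_paperNetwork (n m : ℕ)
    (K : SimplicialComplex ℝ (Fin n → ℝ)) (hKfin : K.faces.Finite)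
    (hKpure : IsPureComplex K)
    (L : SimplicialComplex ℝ (Fin m → ℝ))
    (F : (Fin n → ℝ) → (Fin m → ℝ)) (hF : IsSimplicialMap K L F) :
    ∃ (k : ℕ) (σ : Fin k → AffineBasis (Fin (n + 1)) ℝ (Fin n → ℝ))
      (A : Fin k → ((Fin n → ℝ) →ᵃ[ℝ] (Fin m → ℝ))),
      (∀ i, ∃ τ ∈ K.faces, Set.range ⇑(σ i) = (τ : Set (Fin n → ℝ))) ∧
      ∀ x ∈ K.space, paperNetwork σ A x = F x := by
  obtain ⟨k, τ, hτ⟩ := (hKfin.subset fun _ h => h.1 : (basisFaces K).Finite).fin_embedding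
  have hτ_mem : ∀ i, τ i ∈ basisFaces K := fun i => hτ ▸ mem_range_self i
  choose hτK b hb using hτ_mem
  choose A hA using fun i => hF.1 _ (hτK i)
  refine ⟨k, b, A, fun i => ⟨τ i, hτK i, hb i⟩, fun x hx => ?_⟩
  obtain ⟨τ', hτ', hxτ'⟩ := hKpure.exists_mem_basisFaces_of_mem_space hx
  obtain ⟨i, rfl⟩ : τ' ∈ range τ := hτ ▸ hτ'
  refine paperNetwork_eq_of_forall_mem_convexHull ⟨i, hb i ▸ hxτ'⟩ fun j hj => ?_
  rw [hb j] at hj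
  exact (hA j x hj).symm
end

section
/- (Theorem 4.2) Let K be a finite simplicial complex in ℝⁿ that is pure n-dimensional (every face of K is contained in a face consisting of n+1 points forming an affine basis of ℝⁿ), let L be a finite simplicial complex in ℝᵐ with nonempty space, let g : ℝⁿ → ℝᵐ be continuous on K.space with g(K.space) ⊆ L.space, and let ε > 0. Then there exist k ≥ 1, affine bases σ_1, …, σ_k of ℝⁿ whose convex hulls cover K.space, and affine maps A_1, …, A_k : ℝⁿ → ℝᵐ such that the two-hidden-layer feed-forward network N of the paper's architecture determined by the σ_i and A_i satisfies N(x) ∈ L.space and ‖g(x) − N(x)‖ ≤ ε for every x ∈ K.space. -/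
/-!
Cover the compact set `K.space` by finitely many small simplices `σ i` and let the network be
constant, equal to `g (c i)`, on the `i`-th one. If the simplices are small enough, then for `x` in
`σ i` the point `g x` lies both in the open star of `g (c i)` and within `ε` of it. Hence every face
of `L` whose convex hull contains `g x` also contains all the active values `g (c i)`, and so does
their average, which is the network's output; the average is also within `ε` of `g x`.
-/

open scoped BigOperators
open Geometry

open Set Metric Module Topology

namespace Geometry.SimplicialComplex

variable {E : Type*} [NormedAddCommGroup E] [NormedSpace ℝ E] (L : SimplicialComplex ℝ E)

theorem isCompact_space (hL : L.faces.Finite) : IsCompact L.space :=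
  hL.isCompact_biUnion fun τ _ => τ.finite_toSet.isCompact_convexHull ℝ

/-- Its trace on `L.space` is the open star of `q`: the union of the relative interiors of the
faces whose convex hull contains `q`. -/
def openStar (q : E) : Set E :=
  (⋃ τ ∈ {τ ∈ L.faces | q ∉ convexHull ℝ (τ : Set E)}, convexHull ℝ (τ : Set E))ᶜ

variable {L}

theorem isOpen_openStar (hL : L.faces.Finite) (q : E) : IsOpen (L.openStar q) :=
  (Finite.isClosed_biUnion (hL.subset (sep_subset _ _))
    fun τ _ => (τ.finite_toSet.isCompact_convexHull ℝ).isClosed).isOpen_compl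

theorem mem_openStar_self (q : E) : q ∈ L.openStar q := by
  simp [openStar]

theorem mem_convexHull_of_mem_openStar {q r : E} (hr : r ∈ L.openStar q)
    {τ : Finset E} (hτ : τ ∈ L.faces) (hrτ : r ∈ convexHull ℝ (τ : Set E)) :
    q ∈ convexHull ℝ (τ : Set E) := by
  by_contra hq
  exact hr (mem_biUnion ⟨hτ, hq⟩ hrτ)

end Geometry.SimplicialComplex

section AffineBasisCover

variable {ι E : Type*} [Fintype ι] [NormedAddCommGroup E] [NormedSpace ℝ E]
  [FiniteDimensional ℝ E]

theorem exists_affineBasis_convexHull_mem_nhds_subset (hι : Fintype.card ι = finrank ℝ E + 1)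
    {x : E} {U : Set E} (hU : U ∈ 𝓝 x) :
    ∃ b : AffineBasis ι ℝ E, convexHull ℝ (range b) ∈ 𝓝 x ∧ convexHull ℝ (range b) ⊆ U := by
  obtain ⟨b, hx, hbU⟩ := exists_mem_interior_convexHull_affineBasis hU
  refine ⟨b.reindex (Fintype.equivFinOfCardEq hι).symm, ?_⟩
  rw [AffineBasis.coe_reindex, Equiv.symm_symm, EquivLike.range_comp]
  exact ⟨mem_interior_iff_mem_nhds.1 hx, hbU⟩

theorem exists_affineBases_cover_of_isCompact (hι : Fintype.card ι = finrank ℝ E + 1)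
    {s : Set E} (hs : IsCompact s) (hne : s.Nonempty) (U : E → Set E)
    (hU : ∀ x ∈ s, U x ∈ 𝓝[s] x) :
    ∃ (k : ℕ) (_ : 1 ≤ k) (c : Fin k → E) (b : Fin k → AffineBasis ι ℝ E),
      s ⊆ ⋃ i, convexHull ℝ (range (b i)) ∧
      ∀ i, convexHull ℝ (range (b i)) ∩ s ⊆ U (c i) := by
  have hV : ∀ x ∈ s, ∃ V ∈ 𝓝 x, V ∩ s ⊆ U x := fun x hx =>
    mem_nhdsWithin_iff_exists_mem_nhds_inter.1 (hU x hx)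
  choose! V hVx hVU using hV
  have hb : ∀ x ∈ s, ∃ b : AffineBasis ι ℝ E,
      convexHull ℝ (range b) ∈ 𝓝 x ∧ convexHull ℝ (range b) ⊆ V x := fun x hx =>
    exists_affineBasis_convexHull_mem_nhds_subset hι (hVx x hx)
  have : Nonempty (AffineBasis ι ℝ E) := AffineBasis.exists_affineBasis_of_finiteDimensional hι
  choose! b hbx hbV using hb
  obtain ⟨t, hts, hst⟩ := hs.elim_nhds_subcover (fun x => convexHull ℝ (range (b x))) hbx
  obtain ⟨x, hx⟩ := hne
  have ht : t.Nonempty := by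
    obtain ⟨y, hy, -⟩ := mem_iUnion₂.1 (hst hx)
    exact ⟨y, hy⟩
  let c : Fin t.card → E := fun i => t.equivFin.symm i
  refine ⟨t.card, ht.card_pos, c, fun i => b (c i), fun y hy => ?_, fun i => ?_⟩
  · obtain ⟨z, hz, hyz⟩ := mem_iUnion₂.1 (hst hy)
    exact mem_iUnion.2 ⟨t.equivFin ⟨z, hz⟩, by simpa [c] using hyz⟩
  · have hcs : c i ∈ s := hts _ (t.equivFin.symm i).2
    exact (inter_subset_inter_left s (hbV _ hcs)).trans (hVU _ hcs)

end AffineBasisCover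

theorem simplexIndicator_eq_indicator_s9 {n : ℕ} (σ : AffineBasis (Fin (n + 1)) ℝ (Fin n → ℝ)) :
    simplexIndicator σ = (convexHull ℝ (range σ)).indicator 1 := by
  ext x
  simp [simplexIndicator, indicator, σ.convexHull_eq_nonneg_coord]

theorem paperNetwork_mem_of_convex {n m k : ℕ} {C : Set (Fin m → ℝ)} (hC : Convex ℝ C)
    {σ : Fin k → AffineBasis (Fin (n + 1)) ℝ (Fin n → ℝ)}
    {A : Fin k → ((Fin n → ℝ) →ᵃ[ℝ] (Fin m → ℝ))} {x : Fin n → ℝ}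
    (hx : x ∈ ⋃ i, convexHull ℝ (range (σ i)))
    (hA : ∀ i, x ∈ convexHull ℝ (range (σ i)) → A i x ∈ C) :
    paperNetwork σ A x ∈ C := by
  classical
  obtain ⟨i, hi⟩ := mem_iUnion.1 hx
  simp only [paperNetwork, simplexIndicator_eq_indicator_s9]
  rw [← Finset.centerMass, ← Finset.centerMass_filter_ne_zero]
  refine hC.centerMass_mem (fun j _ => indicator_nonneg (fun _ _ => zero_le_one) _) ?_
    fun j hj => hA j (mem_of_indicator_ne_zero (Finset.mem_filter.1 hj).2)
  rw [Finset.sum_filter_ne_zero]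
  exact (Finset.single_le_sum (fun j _ => indicator_nonneg (fun _ _ => zero_le_one) _)
    (Finset.mem_univ i)).trans_lt' (by simp [hi])

theorem universal_approximation_complexes_general (n m : ℕ)
    (K : SimplicialComplex ℝ (Fin n → ℝ)) (hKfin : K.faces.Finite)
    (L : SimplicialComplex ℝ (Fin m → ℝ)) (hLfin : L.faces.Finite)
    (g : (Fin n → ℝ) → (Fin m → ℝ)) (hg : ContinuousOn g K.space)
    (hgmaps : Set.MapsTo g K.space L.space) (ε : ℝ) (hε : 0 < ε) :
    ∃ (k : ℕ) (_ : 1 ≤ k) (σ : Fin k → AffineBasis (Fin (n + 1)) ℝ (Fin n → ℝ))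
      (A : Fin k → ((Fin n → ℝ) →ᵃ[ℝ] (Fin m → ℝ))),
      K.space ⊆ (⋃ i, convexHull ℝ (Set.range ⇑(σ i))) ∧
      ∀ x ∈ K.space, paperNetwork σ A x ∈ L.space ∧ ‖g x - paperNetwork σ A x‖ ≤ ε := by
  have hcard : Fintype.card (Fin (n + 1)) = finrank ℝ (Fin n → ℝ) + 1 := by simp
  rcases K.space.eq_empty_or_nonempty with hK | hK
  · obtain ⟨b⟩ := AffineBasis.exists_affineBasis_of_finiteDimensional
      (P := Fin n → ℝ) hcard
    exact ⟨1, le_rfl, fun _ => b, fun _ => 0, by simp [hK], by simp [hK]⟩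
  obtain ⟨k, hk, c, σ, hcov, hσ⟩ := exists_affineBases_cover_of_isCompact hcard
    (K.isCompact_space hKfin) hK (fun x => g ⁻¹' (L.openStar (g x) ∩ ball (g x) ε))
    fun x hx => (hg x hx).preimage_mem_nhdsWithin <|
      ((L.isOpen_openStar hLfin _).inter isOpen_ball).mem_nhds
        ⟨L.mem_openStar_self _, mem_ball_self hε⟩
  refine ⟨k, hk, σ, fun i => AffineMap.const ℝ _ (g (c i)), hcov, fun x hx => ?_⟩
  obtain ⟨τ, hτ, hgx⟩ := SimplicialComplex.mem_space_iff.1 (hgmaps hx)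
  have hN : paperNetwork σ (fun i => AffineMap.const ℝ _ (g (c i))) x ∈
      convexHull ℝ (τ : Set (Fin m → ℝ)) ∩ ball (g x) ε := by
    refine paperNetwork_mem_of_convex ((convex_convexHull ℝ _).inter (convex_ball _ _))
      (hcov hx) fun i hi => ?_
    obtain ⟨hstar, hball⟩ := hσ i ⟨hi, hx⟩
    exact ⟨SimplicialComplex.mem_convexHull_of_mem_openStar hstar hτ hgx, mem_ball_comm.1 hball⟩
  exact ⟨L.convexHull_subset_space hτ hN.1, (mem_ball_iff_norm'.1 hN.2).le⟩

/-- Theorem 4.2: any continuous g : |K| → |L| between the spaces of a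
finite pure simplicial complex K in ℝⁿ and a finite simplicial complex L in ℝᵐ can be
ε-approximated on K.space by a two-hidden-layer feed-forward network of the paper's
architecture whose values lie in L.space. -/
theorem universal_approximation_complexes (n m : ℕ)
    (K : SimplicialComplex ℝ (Fin n → ℝ)) (hKfin : K.faces.Finite)
    (hKpure : IsPureComplex K)
    (L : SimplicialComplex ℝ (Fin m → ℝ)) (hLfin : L.faces.Finite)
    (hLne : L.space.Nonempty)
    (g : (Fin n → ℝ) → (Fin m → ℝ)) (hg : ContinuousOn g K.space)
    (hgmaps : Set.MapsTo g K.space L.space) (ε : ℝ) (hε : 0 < ε) :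
    ∃ (k : ℕ) (_ : 1 ≤ k) (σ : Fin k → AffineBasis (Fin (n + 1)) ℝ (Fin n → ℝ))
      (A : Fin k → ((Fin n → ℝ) →ᵃ[ℝ] (Fin m → ℝ))),
      K.space ⊆ (⋃ i, convexHull ℝ (Set.range ⇑(σ i))) ∧
      ∀ x ∈ K.space, paperNetwork σ A x ∈ L.space ∧ ‖g x - paperNetwork σ A x‖ ≤ ε :=
  universal_approximation_complexes_general n m K hKfin L hLfin g hg hgmaps ε hε
end

section
/- (Proposition 5.1) Let X be a compact metric space, K a finite simplicial complex in ℝⁿ, and τ : X ≃ₜ K.space a homeomorphism (where K.space carries the subspace topology of ℝⁿ). Then for every ε > 0 there exists γ > 0 such that for every simplicial complex K' in ℝⁿ with K'.space = K.space whose mesh is at most γ, every face σ ∈ K'.faces satisfies Metric.diam (τ.symm '' (convexHull ℝ σ)) ≤ ε (i.e., the extended mesh of X induced by (K', τ) is at most ε). -/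
open Geometry Metric

/-! `K.space` is compact, being homeomorphic to `X`, so `τ.symm` is uniformly continuous; and the
convex hull of a face of `K'` has the same diameter as the face, which is at most the mesh. -/

theorem UniformContinuous.exists_forall_diam_image_le {α β : Type*} [PseudoMetricSpace α]
    [PseudoMetricSpace β] {f : α → β} (hf : UniformContinuous f) {ε : ℝ} (hε : 0 < ε) :
    ∃ δ > 0, ∀ s : Set α, Bornology.IsBounded s → diam s ≤ δ → diam (f '' s) ≤ ε := by
  obtain ⟨δ, hδ, hfδ⟩ := Metric.uniformContinuous_iff.mp hf ε hε
  refine ⟨δ / 2, half_pos hδ, fun s hs hsδ => diam_le_of_forall_dist_le hε.le ?_⟩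
  rintro _ ⟨x, hx, rfl⟩ _ ⟨y, hy, rfl⟩
  exact (hfδ <| (dist_le_diam_of_mem hs hx hy).trans_lt <| hsδ.trans_lt <| half_lt_self hδ).le

theorem Metric.isBounded_preimage_val {E : Type*} [PseudoMetricSpace E] {A t : Set E}
    (ht : Bornology.IsBounded t) : Bornology.IsBounded (Subtype.val ⁻¹' t : Set A) :=
  isometry_subtype_coe.antilipschitz.isBounded_preimage ht

theorem Metric.diam_preimage_val_le {E : Type*} [PseudoMetricSpace E] {A t : Set E}
    (ht : Bornology.IsBounded t) : diam (Subtype.val ⁻¹' t : Set A) ≤ diam t := by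
  rw [← isometry_subtype_coe.diam_image]
  exact diam_mono (Set.image_preimage_subset _ _) ht

theorem extended_mesh_small_general (n : ℕ) (X : Type*) [MetricSpace X] [CompactSpace X]
    (K : SimplicialComplex ℝ (Fin n → ℝ))
    (τ : X ≃ₜ K.space) :
    ∀ ε > 0, ∃ γ > 0, ∀ K' : SimplicialComplex ℝ (Fin n → ℝ),
      K'.space = K.space →
      (∀ σ ∈ K'.faces, Metric.diam (σ : Set (Fin n → ℝ)) ≤ γ) →
      ∀ σ ∈ K'.faces,
        Metric.diam
          (τ.symm '' {p : K.space | (p : Fin n → ℝ) ∈ convexHull ℝ (σ : Set (Fin n → ℝ))})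
          ≤ ε := by
  intro ε hε
  have : CompactSpace K.space := τ.compactSpace
  obtain ⟨γ, hγ, hsmall⟩ := (CompactSpace.uniformContinuous_of_continuous
    τ.symm.continuous).exists_forall_diam_image_le hε
  refine ⟨γ, hγ, fun K' _ hmesh σ hσ => ?_⟩
  have hhull : Bornology.IsBounded (convexHull ℝ (σ : Set (Fin n → ℝ))) :=
    (σ.finite_toSet.isCompact_convexHull ℝ).isBounded
  refine hsmall _ (isBounded_preimage_val hhull) ?_
  calc diam (Subtype.val ⁻¹' convexHull ℝ (σ : Set (Fin n → ℝ)) : Set K.space)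
      ≤ diam (convexHull ℝ (σ : Set (Fin n → ℝ))) := diam_preimage_val_le hhull
    _ = diam (σ : Set (Fin n → ℝ)) := convexHull_diam _
    _ ≤ γ := hmesh σ hσ

/-- Proposition 5.1: if X is a compact metric space homeomorphic to the
space of a finite simplicial complex K in ℝⁿ via τ, then for every ε > 0 there is γ > 0
such that any complex K' with the same space and mesh at most γ has extended mesh
(the mesh of X induced by (K', τ)) at most ε. -/
theorem extended_mesh_small (n : ℕ) (X : Type*) [MetricSpace X] [CompactSpace X]
    (K : SimplicialComplex ℝ (Fin n → ℝ)) (hKfin : K.faces.Finite)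
    (τ : X ≃ₜ K.space) :
    ∀ ε > 0, ∃ γ > 0, ∀ K' : SimplicialComplex ℝ (Fin n → ℝ),
      K'.space = K.space →
      (∀ σ ∈ K'.faces, Metric.diam (σ : Set (Fin n → ℝ)) ≤ γ) →
      ∀ σ ∈ K'.faces,
        Metric.diam
          (τ.symm '' {p : K.space | (p : Fin n → ℝ) ∈ convexHull ℝ (σ : Set (Fin n → ℝ))})
          ≤ ε :=
  extended_mesh_small_general n X K τ
end

section
/- Let E be a real normed vector space, let n be a natural number, and let s be a finite set of n+1 points of E with barycenter c = (1/(n+1)) Σ_{v ∈ s} v. Then for every v ∈ s, ‖c − v‖ ≤ (n / (n+1)) · Metric.diam s. (This is the classical estimate showing that barycentric subdivision shrinks the diameter of an n-simplex by the factor n/(n+1), which underlies the bound m(Sdᵗ K) ≤ m(K)·(n/(n+1))ᵗ used in Section 6.) -/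
open scoped BigOperators

/-! Writing `c - v = (1/(n+1)) • ∑ u ∈ s, (u - v)`, the term `u = v` vanishes and each of the
other `n` terms has norm at most `diam s`. -/

namespace Finset

variable {E : Type*} [SeminormedAddCommGroup E]

theorem sum_norm_sub_le_card_sub_one_mul_diam (s : Finset E) {v : E} (hv : v ∈ s) :
    ∑ u ∈ s, ‖u - v‖ ≤ ((#s - 1 : ℕ) : ℝ) * Metric.diam (s : Set E) := by
  classical
  rw [← sum_erase s (f := fun u => ‖u - v‖) (by rw [sub_self, norm_zero]),
    ← card_erase_of_mem hv, ← nsmul_eq_mul, ← sum_const]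
  refine sum_le_sum fun u hu => ?_
  rw [← dist_eq_norm]
  exact Metric.dist_le_diam_of_mem s.finite_toSet.isBounded (mem_erase.1 hu).2 hv

theorem inv_card_smul_sum_sub {𝕜 M : Type*} [DivisionRing 𝕜] [CharZero 𝕜] [AddCommGroup M]
    [Module 𝕜 M] (s : Finset M) (hs : s.Nonempty) (v : M) :
    (#s : 𝕜)⁻¹ • ∑ u ∈ s, u - v = (#s : 𝕜)⁻¹ • ∑ u ∈ s, (u - v) := by
  have hcard : (#s : 𝕜) ≠ 0 := by exact_mod_cast hs.card_ne_zero
  rw [sum_sub_distrib, sum_const, smul_sub, ← Nat.cast_smul_eq_nsmul 𝕜, smul_smul,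
    inv_mul_cancel₀ hcard, one_smul]

theorem norm_inv_card_smul_sum_sub_le [NormedSpace ℝ E] (s : Finset E) {v : E} (hv : v ∈ s) :
    ‖(#s : ℝ)⁻¹ • ∑ u ∈ s, u - v‖ ≤ ((#s - 1 : ℕ) : ℝ) / #s * Metric.diam (s : Set E) := by
  rw [inv_card_smul_sum_sub s ⟨v, hv⟩, norm_smul, norm_inv, Real.norm_natCast, div_mul_eq_mul_div,
    inv_mul_eq_div]
  gcongr
  exact (norm_sum_le _ _).trans (sum_norm_sub_le_card_sub_one_mul_diam s hv)

end Finset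

/-- the barycenter of a set of n+1 points in a real normed vector space is
within (n/(n+1)) · diam s of each of the points. -/
theorem barycenter_dist_le (E : Type*) [NormedAddCommGroup E] [NormedSpace ℝ E]
    (n : ℕ) (s : Finset E) (hcard : s.card = n + 1)
    (c : E) (hc : c = ((1 : ℝ) / ((n : ℝ) + 1)) • ∑ v ∈ s, v) :
    ∀ v ∈ s, ‖c - v‖ ≤ ((n : ℝ) / ((n : ℝ) + 1)) * Metric.diam (s : Set E) := by
  intro v hv
  have h := s.norm_inv_card_smul_sum_sub_le hv
  rw [hcard, Nat.add_sub_cancel] at h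
  push_cast at h
  rwa [hc, one_div]
end

section
/- Let K be a simplicial complex in ℝⁿ, let σ, τ ∈ K.faces, and let x ∈ convexHull ℝ σ ∩ convexHull ℝ τ. Let φ : ℝⁿ → ℝᵐ be any function (a vertex map on the vertices of K). Suppose λ : ℝⁿ → ℝ and μ : ℝⁿ → ℝ are weight functions with λ_v ≥ 0 for v ∈ σ, Σ_{v ∈ σ} λ_v = 1, Σ_{v ∈ σ} λ_v • v = x, and μ_w ≥ 0 for w ∈ τ, Σ_{w ∈ τ} μ_w = 1, Σ_{w ∈ τ} μ_w • w = x. Then Σ_{v ∈ σ} λ_v • φ(v) = Σ_{w ∈ τ} μ_w • φ(w). (This is the well-definedness of the simplicial map induced by a vertex map: the barycentric extension of φ does not depend on the face of K containing the point x.) -/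
open scoped BigOperators
open Geometry

/-! The point `x` lies in the convex hull of the common face `σ ∩ τ`, so it has barycentric
weights `ν` there. Extended by zero, `ν` represents `x` in `σ` and in `τ` as well, and by
affine independence of a face these weights coincide with `lam` on `σ` and with `mu` on `τ`.
Hence both sums equal `∑ v ∈ σ ∩ τ, ν v • φ v`. -/

lemma Finset.sum_indicator_smul_of_subset {k V M : Type*} [Zero k] [AddCommMonoid M]
    [SMulWithZero k M] {s u : Finset V} (hus : u ⊆ s) (b : V → k) (f : V → M) :
    ∑ v ∈ s, (u : Set V).indicator b v • f v = ∑ v ∈ u, b v • f v := by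
  simp_rw [← Set.indicator_smul_apply_left]
  exact Finset.sum_indicator_subset _ hus

lemma AffineIndependent.sum_smul_eq_of_subset {k V W : Type*} [Ring k] [AddCommGroup V]
    [Module k V] [AddCommGroup W] [Module k W] {s u : Finset V}
    (hs : AffineIndependent k ((↑) : s → V)) (hus : u ⊆ s) {a b : V → k}
    (ha : ∑ v ∈ s, a v = 1) (hb : ∑ v ∈ u, b v = 1)
    (hab : ∑ v ∈ s, a v • v = ∑ v ∈ u, b v • v) (φ : V → W) :
    ∑ v ∈ s, a v • φ v = ∑ v ∈ u, b v • φ v := by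
  have weights_eq := hs.eq_of_sum_eq_sum_subtype (w₂ := (u : Set V).indicator b)
    (by rw [ha, Finset.sum_indicator_subset _ hus, hb])
    (by rw [hab]; exact (Finset.sum_indicator_smul_of_subset hus b id).symm)
  rw [← Finset.sum_indicator_smul_of_subset hus]
  exact Finset.sum_congr rfl fun v hv => by rw [weights_eq v hv]

theorem barycentric_extension_well_defined_general (n m : ℕ)
    (K : SimplicialComplex ℝ (Fin n → ℝ)) (σ τ : Finset (Fin n → ℝ))
    (hσ : σ ∈ K.faces) (hτ : τ ∈ K.faces) (x : Fin n → ℝ)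
    (hx : x ∈ convexHull ℝ (σ : Set (Fin n → ℝ)) ∩ convexHull ℝ (τ : Set (Fin n → ℝ)))
    (φ : (Fin n → ℝ) → (Fin m → ℝ))
    (lam mu : (Fin n → ℝ) → ℝ)
    (hlam1 : ∑ v ∈ σ, lam v = 1)
    (hlamx : ∑ v ∈ σ, lam v • v = x)
    (hmu1 : ∑ w ∈ τ, mu w = 1)
    (hmux : ∑ w ∈ τ, mu w • w = x) :
    ∑ v ∈ σ, lam v • φ v = ∑ w ∈ τ, mu w • φ w := by
  have hx_inter : x ∈ convexHull ℝ ((σ ∩ τ : Finset (Fin n → ℝ)) : Set (Fin n → ℝ)) := by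
    rw [Finset.coe_inter]
    exact K.inter_subset_convexHull hσ hτ hx
  obtain ⟨ν, -, hν1, hνx⟩ := Finset.mem_convexHull'.1 hx_inter
  rw [(K.indep hσ).sum_smul_eq_of_subset Finset.inter_subset_left hlam1 hν1
      (by rw [hlamx, hνx]) φ,
    (K.indep hτ).sum_smul_eq_of_subset Finset.inter_subset_right hmu1 hν1
      (by rw [hmux, hνx]) φ]

/-- the barycentric extension of a vertex map φ is well defined: its value
at a point x of the space of a simplicial complex K does not depend on the face of K
whose convex hull contains x. -/
theorem barycentric_extension_well_defined (n m : ℕ)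
    (K : SimplicialComplex ℝ (Fin n → ℝ)) (σ τ : Finset (Fin n → ℝ))
    (hσ : σ ∈ K.faces) (hτ : τ ∈ K.faces) (x : Fin n → ℝ)
    (hx : x ∈ convexHull ℝ (σ : Set (Fin n → ℝ)) ∩ convexHull ℝ (τ : Set (Fin n → ℝ)))
    (φ : (Fin n → ℝ) → (Fin m → ℝ))
    (lam mu : (Fin n → ℝ) → ℝ)
    (hlam0 : ∀ v ∈ σ, 0 ≤ lam v) (hlam1 : ∑ v ∈ σ, lam v = 1)
    (hlamx : ∑ v ∈ σ, lam v • v = x)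
    (hmu0 : ∀ w ∈ τ, 0 ≤ mu w) (hmu1 : ∑ w ∈ τ, mu w = 1)
    (hmux : ∑ w ∈ τ, mu w • w = x) :
    ∑ v ∈ σ, lam v • φ v = ∑ w ∈ τ, mu w • φ w :=
  barycentric_extension_well_defined_general n m K σ τ hσ hτ x hx φ lam mu hlam1 hlamx hmu1 hmux
end
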